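/- Let k ≥ 2 be an integer and G a simple non-complete graph on n vertices with β^k(G) ≥ 1. Then the vertex connectivity satisfies κ(G) ≥ ((β^k(G) − 1)/(β^k(G) + 1)) · n. -/

import Mathlib

/-! Suppose `U` splits the other vertices into nonempty parts `A` and `B` with no edge between
them, and write `β` for the `k`-th binding number. If `k ≤ |A|`, every vertex with `k` neighbours
in `A` lies in `A ∪ U`, so `β |A| ≤ |A| + |U|`. If `|A| < k`, enlarge `A` to a `k`-set `S`: a
vertex with `k` neighbours in `S` is adjacent to all of `S`, hence lies in `U \ S`, so
`β k ≤ |U|`. Either way `(β - 1) |A| ≤ |U|`; the same holds for `B`, and adding both bounds to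
`n = |A| + |B| + |U|` gives `(β - 1) n ≤ (β + 1) |U|`. -/

open Finset
open scoped Classical

variable {V : Type*}

/-- The k-th neighborhood: vertices adjacent to at least `k` vertices of `S`. -/
noncomputable def kNbhd [Fintype V] (G : SimpleGraph V) (k : ℕ) (S : Finset V) : Finset V :=
  Finset.univ.filter fun v => k ≤ (S.filter fun u => G.Adj v u).card

/-- The k-th binding number. -/
noncomputable def bindingNum [Fintype V] (G : SimpleGraph V) (k : ℕ) : ℝ :=
  if h : (Finset.univ.filter fun S : Finset V =>
      k ≤ S.card ∧ kNbhd G k S ≠ Finset.univ).Nonempty then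
    (Finset.univ.filter fun S : Finset V =>
      k ≤ S.card ∧ kNbhd G k S ≠ Finset.univ).inf' h
      fun S => ((kNbhd G k S).card : ℝ) / (S.card : ℝ)
  else 0

/-- `A` is a union of connected components of `G - U`. -/
def Separates (G : SimpleGraph V) (U A : Finset V) : Prop :=
  Disjoint A U ∧ ∀ a ∈ A, ∀ v, G.Adj a v → v ∈ A ∪ U

section kNbhd

variable [Fintype V] {G : SimpleGraph V} {k : ℕ} {S U A : Finset V} {v : V}

lemma mem_kNbhd : v ∈ kNbhd G k S ↔ k ≤ (S.filter fun u => G.Adj v u).card := by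
  simp [kNbhd]

lemma pos_of_kNbhd_ne_univ (h : kNbhd G k S ≠ univ) : 0 < k := by
  refine Nat.pos_of_ne_zero fun hk => h ?_
  ext v
  simp [mem_kNbhd, hk]

lemma exists_adj_of_mem_kNbhd (hk : 0 < k) (hv : v ∈ kNbhd G k S) : ∃ u ∈ S, G.Adj v u := by
  obtain ⟨u, hu⟩ := card_pos.mp (hk.trans_le (mem_kNbhd.mp hv))
  exact ⟨u, (mem_filter.mp hu).1, (mem_filter.mp hu).2⟩

lemma mem_kNbhd_iff_of_card_eq (hS : S.card = k) : v ∈ kNbhd G k S ↔ ∀ u ∈ S, G.Adj v u := by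
  rw [mem_kNbhd, ← card_filter_eq_iff, ← hS]
  exact ⟨fun h => le_antisymm (card_filter_le _ _) h, Eq.ge⟩

lemma Separates.kNbhd_subset (hA : Separates G U A) (hk : 0 < k) : kNbhd G k A ⊆ A ∪ U := by
  intro v hv
  obtain ⟨a, ha, hva⟩ := exists_adj_of_mem_kNbhd hk hv
  exact hA.2 a ha v hva.symm

lemma Separates.kNbhd_subset_sdiff (hA : Separates G U A) (hAne : A.Nonempty) (hAS : A ⊆ S)
    (hS : S.card = k) : kNbhd G k S ⊆ U \ S := by
  intro v hv
  rw [mem_kNbhd_iff_of_card_eq hS] at hv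
  obtain ⟨a, ha⟩ := hAne
  have hvS : v ∉ S := fun hvS => G.irrefl (hv v hvS)
  have hvAU := hA.2 a ha v (hv a (hAS ha)).symm
  exact mem_sdiff.mpr ⟨(mem_union.mp hvAU).resolve_left fun hvA => hvS (hAS hvA), hvS⟩

lemma Separates.compl (hA : Separates G U A) : Separates G U (A ∪ U)ᶜ := by
  refine ⟨disjoint_left.mpr fun v hv hvU => mem_compl.mp hv (mem_union_right A hvU), ?_⟩
  intro b hb v hbv
  by_contra hv
  have hvA : v ∈ A := by
    simp only [mem_union, mem_compl, not_or] at hb hv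
    tauto
  exact mem_compl.mp hb (hA.2 v hvA b hbv.symm)

end kNbhd

section bindingNum

variable [Fintype V] {G : SimpleGraph V} {k : ℕ} {S U A : Finset V}

lemma bindingNum_le_div (hkS : k ≤ S.card) (hS : kNbhd G k S ≠ univ) :
    bindingNum G k ≤ (kNbhd G k S).card / S.card := by
  have hmem : S ∈ univ.filter fun T : Finset V => k ≤ T.card ∧ kNbhd G k T ≠ univ := by
    simp [hkS, hS]
  rw [bindingNum, dif_pos ⟨S, hmem⟩]
  exact inf'_le _ hmem

lemma bindingNum_mul_card_le (hkS : k ≤ S.card) (hS : kNbhd G k S ≠ univ) :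
    bindingNum G k * S.card ≤ (kNbhd G k S).card := by
  have hpos : (0 : ℝ) < S.card := by
    exact_mod_cast (pos_of_kNbhd_ne_univ hS).trans_le hkS
  exact (le_div_iff₀ hpos).mp (bindingNum_le_div hkS hS)

lemma exists_of_bindingNum_ne_zero (h : bindingNum G k ≠ 0) :
    ∃ S : Finset V, k ≤ S.card ∧ kNbhd G k S ≠ univ := by
  by_contra hS
  refine h (dif_neg ?_)
  rintro ⟨S, hS'⟩
  exact hS ⟨S, by simpa using hS'⟩

lemma bindingNum_le_card : bindingNum G k ≤ Fintype.card V := by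
  rcases le_or_gt (bindingNum G k) 0 with hb | hb
  · exact hb.trans (Nat.cast_nonneg _)
  obtain ⟨S, hkS, hS⟩ := exists_of_bindingNum_ne_zero hb.ne'
  have hS1 : (1 : ℝ) ≤ S.card := by exact_mod_cast (pos_of_kNbhd_ne_univ hS).trans_le hkS
  calc bindingNum G k ≤ bindingNum G k * S.card := le_mul_of_one_le_right hb.le hS1
    _ ≤ (kNbhd G k S).card := bindingNum_mul_card_le hkS hS
    _ ≤ Fintype.card V := by exact_mod_cast card_le_univ _

lemma Separates.bindingNum_mul_card_le_add (hA : Separates G U A) (hk : 0 < k) (hkA : k ≤ A.card)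
    (hrest : (A ∪ U)ᶜ.Nonempty) : bindingNum G k * A.card ≤ A.card + U.card := by
  have hsub := hA.kNbhd_subset hk
  obtain ⟨y, hy⟩ := hrest
  have hne : kNbhd G k A ≠ univ := fun h => mem_compl.mp hy (hsub (h ▸ mem_univ y))
  calc bindingNum G k * A.card ≤ (kNbhd G k A).card := bindingNum_mul_card_le hkA hne
    _ ≤ A.card + U.card := by exact_mod_cast (card_le_card hsub).trans (card_union_le A U)

lemma Separates.bindingNum_mul_le_card (hA : Separates G U A) (hAne : A.Nonempty)
    (hAk : A.card < k) (hkn : k ≤ Fintype.card V) : bindingNum G k * k ≤ U.card := by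
  obtain ⟨S, hAS, hS⟩ := exists_superset_card_eq hAk.le hkn
  have hsub := hA.kNbhd_subset_sdiff hAne hAS hS
  obtain ⟨a, ha⟩ := hAne
  have hne : kNbhd G k S ≠ univ := fun h => (mem_sdiff.mp (hsub (h ▸ mem_univ a))).2 (hAS ha)
  calc bindingNum G k * k = bindingNum G k * S.card := by rw [hS]
    _ ≤ (kNbhd G k S).card := bindingNum_mul_card_le hS.ge hne
    _ ≤ U.card := by exact_mod_cast (card_le_card hsub).trans (card_le_card sdiff_subset)

lemma Separates.sub_one_mul_card_le (hA : Separates G U A) (hk : 0 < k)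
    (hkn : k ≤ Fintype.card V) (hAne : A.Nonempty) (hrest : (A ∪ U)ᶜ.Nonempty) :
    (bindingNum G k - 1) * A.card ≤ U.card := by
  rcases le_or_gt k A.card with hkA | hAk
  · linarith [hA.bindingNum_mul_card_le_add hk hkA hrest]
  · have hbk := hA.bindingNum_mul_le_card hAne hAk hkn
    have hAk' : (A.card : ℝ) ≤ k := by exact_mod_cast hAk.le
    rcases le_or_gt (bindingNum G k) 1 with hb | hb
    · exact (mul_nonpos_of_nonpos_of_nonneg (by linarith) (Nat.cast_nonneg _)).trans
        (Nat.cast_nonneg _)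
    · calc (bindingNum G k - 1) * A.card ≤ bindingNum G k * A.card := by
            linarith [(Nat.cast_nonneg A.card : (0 : ℝ) ≤ A.card)]
        _ ≤ bindingNum G k * k := mul_le_mul_of_nonneg_left hAk' (by linarith)
        _ ≤ U.card := hbk

lemma Separates.sub_one_mul_card_le_add_one_mul (hA : Separates G U A) (hk : 0 < k)
    (hkn : k ≤ Fintype.card V) (hAne : A.Nonempty) (hrest : (A ∪ U)ᶜ.Nonempty) :
    (bindingNum G k - 1) * Fintype.card V ≤ (bindingNum G k + 1) * U.card := by
  obtain ⟨a, ha⟩ := hAne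
  have hA' := hA.sub_one_mul_card_le hk hkn ⟨a, ha⟩ hrest
  have hB := hA.compl.sub_one_mul_card_le hk hkn hrest
    ⟨a, by simp [ha, disjoint_left.mp hA.1 ha]⟩
  have hn : (Fintype.card V : ℝ) = A.card + ((A ∪ U)ᶜ).card + U.card := by
    rw [← card_compl_add_card (A ∪ U), card_union_of_disjoint hA.1]
    push_cast
    ring
  rw [hn]
  linarith

end bindingNum

lemma exists_separates_of_not_connected [Fintype V] {G : SimpleGraph V} {U : Finset V}
    (h : ¬ (G.induce ((↑U : Set V)ᶜ)).Connected) (hU : Uᶜ.Nonempty) :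
    ∃ A : Finset V, Separates G U A ∧ A.Nonempty ∧ (A ∪ U)ᶜ.Nonempty := by
  set H := G.induce ((↑U : Set V)ᶜ)
  have hH : ¬ H.Preconnected := fun hpre => h ((SimpleGraph.connected_iff H).mpr
    ⟨hpre, by obtain ⟨v, hv⟩ := hU; exact ⟨⟨v, by simpa using hv⟩⟩⟩)
  obtain ⟨x, y, hxy⟩ : ∃ x y, ¬ H.Reachable x y := by
    simpa [SimpleGraph.Preconnected] using hH
  let A : Finset V := univ.filter fun v => ∃ hv : v ∈ (↑U : Set V)ᶜ, H.Reachable x ⟨v, hv⟩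
  have hA : Separates G U A := by
    refine ⟨disjoint_left.mpr fun v hv => ?_, fun a ha v hav => ?_⟩
    · obtain ⟨hvU, -⟩ := (mem_filter.mp hv).2
      simpa using hvU
    · obtain ⟨_, hxa⟩ := (mem_filter.mp ha).2
      by_cases hvU : v ∈ U
      · exact mem_union_right A hvU
      · have hv : v ∈ (↑U : Set V)ᶜ := by simpa using hvU
        exact mem_union_left U (mem_filter.mpr
          ⟨mem_univ v, hv, hxa.trans (SimpleGraph.Adj.reachable (G := H) hav)⟩)
  refine ⟨A, hA, ⟨x, mem_filter.mpr ⟨mem_univ _, x.2, SimpleGraph.Reachable.refl _⟩⟩, y, ?_⟩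
  simp only [mem_compl, mem_union, not_or]
  exact ⟨fun hyA => hxy (mem_filter.mp hyA).2.2, y.2⟩

theorem stmt_10_general [Fintype V] (k : ℕ) (G : SimpleGraph V)
    (hβ : 1 ≤ bindingNum G k) :
    ∀ U : Finset V,
      (¬ (G.induce ((↑U : Set V)ᶜ)).Connected ∨ ((↑U : Set V)ᶜ).ncard ≤ 1) →
      (bindingNum G k - 1) / (bindingNum G k + 1) * (Fintype.card V : ℝ) ≤
        (U.card : ℝ) := by
  intro U hU
  obtain ⟨S, hkS, hS⟩ := exists_of_bindingNum_ne_zero (G := G) (k := k) (by linarith)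
  have hk := pos_of_kNbhd_ne_univ hS
  have hkn : k ≤ Fintype.card V := hkS.trans (card_le_univ S)
  rw [div_mul_eq_mul_div, div_le_iff₀ (by linarith), mul_comm (U.card : ℝ)]
  rw [show ((↑U : Set V)ᶜ).ncard = (Uᶜ).card by rw [← coe_compl, Set.ncard_coe_finset]] at hU
  rcases le_or_gt (Uᶜ).card 1 with hsmall | hlarge
  · -- `β ≤ n` makes the bound hold as soon as `|U| ≥ n - 1`.
    have hn : (Fintype.card V : ℝ) ≤ U.card + 1 := by
      have := card_compl_add_card U
      exact_mod_cast (by omega : Fintype.card V ≤ U.card + 1)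
    nlinarith [bindingNum_le_card (G := G) (k := k)]
  · obtain ⟨A, hA, hAne, hrest⟩ := exists_separates_of_not_connected
      (hU.resolve_right hlarge.not_ge) (card_pos.mp (by omega : 0 < (Uᶜ).card))
    exact hA.sub_one_mul_card_le_add_one_mul hk hkn hAne hrest

theorem stmt_10 [Fintype V] (k : ℕ) (hk : 2 ≤ k) (G : SimpleGraph V)
    (hG : G ≠ ⊤) (hβ : 1 ≤ bindingNum G k) :
    ∀ U : Finset V,
      (¬ (G.induce ((↑U : Set V)ᶜ)).Connected ∨ ((↑U : Set V)ᶜ).ncard ≤ 1) →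
      (bindingNum G k - 1) / (bindingNum G k + 1) * (Fintype.card V : ℝ) ≤
        (U.card : ℝ) :=
  stmt_10_general k G hβ
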